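/- Let ρ, σ, ρ₁, σ₁ ∈ ℝ and κ ∈ ℝ \ {0}, and set R(t) = t² + ρt + σ. Define Natanzon parameters a = 1/κ, c₀ = σ/κ, c₁ = (1+ρ+σ)/κ, f = −1, h₀ = −(σ+σ₁), h₁ = −(1+ρ+ρ₁+σ+σ₁), and H(t) = at² + (c₁−c₀−a)t + c₀, Δ = (a−c₀−c₁)² − 4c₀c₁. Then H(t) = R(t)/κ for all t, and for every real y with y ∉ {0,1} and R(y) ≠ 0: (y²(1−y)²/H(y)²)·[ a + (a+(c₁−c₀)(2y−1))/(y(y−1)) − (5/4)·Δ/H(y) ] + (f·y(y−1) + h₀(1−y) + h₁y + 1)/H(y) = (κ·y²(1−y)²/R(y))·[ 1/(y²(1−y)²) + 2/R(y) + (1−2y)(2y+ρ)/(y(1−y)R(y)) − 5(2y+ρ)²/(4R(y)²) ] − κ·(y² + (ρ+ρ₁)y + σ+σ₁)/R(y). -/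

import Mathlib

/-- Natanzon's quadratic `H(t) = at² + (c₁−c₀−a)t + c₀`. -/
def natanzonH (a c₀ c₁ : ℝ) : ℝ → ℝ := fun t => a * t ^ 2 + (c₁ - c₀ - a) * t + c₀

/-- Iwata's first quadratic `R(t) = t² + ρt + σ`. -/
def iwataR (ρ σ : ℝ) : ℝ → ℝ := fun t => t ^ 2 + ρ * t + σ

/-! Under the substitution, `H = R/κ` and Natanzon's discriminant `Δ` becomes `(ρ² − 4σ)/κ²`,
the discriminant of `R` scaled by `κ⁻²`. After these two rewrites both potentials are rational
functions of `y` with denominator dividing `κ y²(1−y)² R(y)²`, and clearing it leaves a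
polynomial identity. -/

theorem natanzonH_eq_iwataR_div (ρ σ κ : ℝ) :
    natanzonH (1 / κ) (σ / κ) ((1 + ρ + σ) / κ) = fun t => iwataR ρ σ t / κ := by
  funext t
  simp only [natanzonH, iwataR]
  ring

theorem natanzon_discrim_eq (ρ σ κ : ℝ) :
    (1 / κ - σ / κ - (1 + ρ + σ) / κ) ^ 2 - 4 * (σ / κ) * ((1 + ρ + σ) / κ)
      = (ρ ^ 2 - 4 * σ) / κ ^ 2 := by
  ring

theorem stmt_8 (ρ σ ρ₁ σ₁ κ : ℝ) (hκ : κ ≠ 0)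
    (a c₀ c₁ f h₀ h₁ : ℝ)
    (ha : a = 1 / κ) (hc₀ : c₀ = σ / κ) (hc₁ : c₁ = (1 + ρ + σ) / κ)
    (hf : f = -1) (hh₀ : h₀ = -(σ + σ₁)) (hh₁ : h₁ = -(1 + ρ + ρ₁ + σ + σ₁)) :
    (∀ t : ℝ, natanzonH a c₀ c₁ t = iwataR ρ σ t / κ) ∧
    ∀ y : ℝ, y ≠ 0 → y ≠ 1 → iwataR ρ σ y ≠ 0 →
      (y ^ 2 * (1 - y) ^ 2 / (natanzonH a c₀ c₁ y) ^ 2) *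
            (a + (a + (c₁ - c₀) * (2 * y - 1)) / (y * (y - 1))
              - (5 / 4) * ((a - c₀ - c₁) ^ 2 - 4 * c₀ * c₁) / natanzonH a c₀ c₁ y)
          + (f * y * (y - 1) + h₀ * (1 - y) + h₁ * y + 1) / natanzonH a c₀ c₁ y
        = (κ * y ^ 2 * (1 - y) ^ 2 / iwataR ρ σ y) *
            (1 / (y ^ 2 * (1 - y) ^ 2) + 2 / iwataR ρ σ y
              + (1 - 2 * y) * (2 * y + ρ) / (y * (1 - y) * iwataR ρ σ y)
              - 5 * (2 * y + ρ) ^ 2 / (4 * (iwataR ρ σ y) ^ 2))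
          - κ * (y ^ 2 + (ρ + ρ₁) * y + σ + σ₁) / iwataR ρ σ y := by
  subst ha hc₀ hc₁ hf hh₀ hh₁
  rw [natanzonH_eq_iwataR_div]
  refine ⟨fun t => rfl, fun y hy₀ hy₁ hR => ?_⟩
  rw [natanzon_discrim_eq]
  field_simp
  simp only [iwataR]
  ring
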